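/- arXiv:2508.11587 — 5 statements merged into one kernel-verified Lean document; each statement's English description precedes it below -/
import Mathlib

section
/- The number of parking functions of length n is (n+1)^(n-1). -/
/-!
Pollak's circular argument. Put `n + 1` spots on a circle `ZMod (n + 1)`; rotation acts freely
on the `(n + 1) ^ n` preference functions `Fin n → ZMod (n + 1)`. A preference function is a
parking function exactly when the walk "cars preferring one of the spots `1, …, k`, minus `k`"
stays nonnegative for `k ≤ n`. Rotating the preferences shifts this walk, and the walk drops by
exactly one per full turn, so by the cycle lemma exactly one rotation in every orbit is a
parking function. Hence the parking functions number `(n + 1) ^ n / (n + 1)`.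
-/

open Finset

/-- A parking function of length `n`: a word with entries in `{1, ..., n}` whose weakly
increasing rearrangement `b` satisfies `b i ≤ i` (1-indexed). -/
def IsParkingFunction (n : ℕ) (α : Fin n → ℕ) : Prop :=
  (∀ i, 1 ≤ α i ∧ α i ≤ n) ∧
    ∃ σ : Equiv.Perm (Fin n),
      (∀ i j : Fin n, i ≤ j → α (σ i) ≤ α (σ j)) ∧
      ∀ i : Fin n, α (σ i) ≤ (i : ℕ) + 1

theorem cycle_lemma {m : ℕ} (hm : 0 < m) {S : ℕ → ℤ} (hS : ∀ k, S (k + m) = S k - 1) :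
    ∃! t, t < m ∧ ∀ k < m, S t ≤ S (t + k) := by
  classical
  have hmin : ∃ t, t < m ∧ ∀ j < m, S t ≤ S j := by
    obtain ⟨t, ht, hmin⟩ := (range m).exists_min_image S ⟨0, mem_range.2 hm⟩
    exact ⟨t, mem_range.1 ht, fun j hj => hmin j (mem_range.2 hj)⟩
  -- the first minimiser of `S` on `[0, m)` is the good shift
  set t₀ := Nat.find hmin
  obtain ⟨htm, htmin⟩ : t₀ < m ∧ ∀ j < m, S t₀ ≤ S j := Nat.find_spec hmin
  have hbefore : ∀ j < t₀, S t₀ < S j := by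
    intro j hj
    have := Nat.find_min hmin hj
    push Not at this
    obtain ⟨i, hi, hij⟩ := this (hj.trans htm)
    exact (htmin i hi).trans_lt hij
  have hgood : ∀ k < m, S t₀ ≤ S (t₀ + k) := by
    intro k hk
    by_cases h : t₀ + k < m
    · exact htmin _ h
    · obtain ⟨j, hj⟩ : ∃ j, t₀ + k = j + m := ⟨t₀ + k - m, by omega⟩
      rw [hj, hS]
      linarith [hbefore j (by omega)]
  -- of two good shifts a < b, the walk would satisfy S a ≤ S b ≤ S (a + m) = S a - 1
  have no_two_good : ∀ a b, a < b → b < a + m → (∀ k < m, S a ≤ S (a + k)) →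
      ¬ ∀ k < m, S b ≤ S (b + k) := by
    intro a b hab hb ha hb'
    have h1 := ha (b - a) (by omega)
    have h2 := hb' (a + m - b) (by omega)
    rw [show a + (b - a) = b by omega] at h1
    rw [show b + (a + m - b) = a + m by omega, hS] at h2
    omega
  refine ⟨t₀, ⟨htm, hgood⟩, fun t ⟨htm', ht⟩ => ?_⟩
  rcases lt_trichotomy t t₀ with h | h | h
  · exact (no_two_good _ _ h (by omega) ht hgood).elim
  · exact h
  · exact (no_two_good _ _ h (by omega) hgood ht).elim

theorem sum_range_add_natCast {M : Type*} [AddCommMonoid M] {n : ℕ} (h : ZMod (n + 1) → M)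
    (a : ZMod (n + 1)) : ∑ j ∈ range (n + 1), h (a + j) = ∑ x, h x := by
  rw [← Fin.sum_univ_eq_sum_range (fun j => h (a + j))]
  exact Fintype.sum_equiv (Equiv.addLeft a) _ _
    fun x => congrArg (fun y => h (a + y)) (ZMod.natCast_zmod_val x)

theorem card_subtype_mul_card_of_existsUnique_vadd {G X : Type*} [AddGroup G] [AddAction G X]
    {P : X → Prop} (h : ∀ x, ∃! g : G, P (g +ᵥ x)) :
    Nat.card {x // P x} * Nat.card G = Nat.card X := by
  rw [← Nat.card_prod]
  refine Nat.card_eq_of_bijective (fun p => p.2 +ᵥ p.1.1) ⟨?_, fun y => ?_⟩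
  · rintro ⟨⟨x, hx⟩, g⟩ ⟨⟨x', hx'⟩, g'⟩ (hxy : g +ᵥ x = g' +ᵥ x')
    have hx'x : x' = (-g' + g) +ᵥ x := by rw [add_vadd, hxy, neg_vadd_vadd]
    obtain rfl : g' = g :=
      neg_add_eq_zero.1 <| (h x).unique (by rwa [← hx'x]) (by rwa [zero_vadd])
    obtain rfl : x' = x := by simpa using hx'x
    rfl
  · obtain ⟨g, hg, -⟩ := h y
    exact ⟨(⟨g +ᵥ y, hg⟩, -g), neg_vadd_vadd g y⟩

theorem isParkingFunction_iff_le_card {n : ℕ} {α : Fin n → ℕ} :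
    IsParkingFunction n α ↔ ∀ k ≤ n, k ≤ #{i | α i ∈ Icc 1 k} := by
  constructor
  · rintro ⟨hbound, σ, -, hle⟩ k hk
    calc k = #(univ : Finset (Fin k)) := by simp
      _ ≤ #{i | α i ∈ Icc 1 k} := by
        refine card_le_card_of_injOn (fun j => σ (Fin.castLE hk j)) (fun j _ => ?_)
          (fun a _ b _ hab => Fin.castLE_injective hk (σ.injective hab))
        have := hle (Fin.castLE hk j)
        simp only [coe_filter, mem_univ, true_and, Set.mem_ofPred_eq, mem_Icc,
          Fin.val_castLE] at this ⊢
        exact ⟨(hbound _).1, by omega⟩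
  · intro h
    have hbound : ∀ i, 1 ≤ α i ∧ α i ≤ n := by
      have hall : #{i | α i ∈ Icc 1 n} = #(univ : Finset (Fin n)) :=
        (card_filter_le _ _).antisymm (by simpa using h n le_rfl)
      simpa using card_filter_eq_iff.1 hall
    refine ⟨hbound, Tuple.sort α, fun i j hij => Tuple.monotone_sort α hij, fun i => ?_⟩
    by_contra! hlt
    -- every car preferring one of the first `i + 1` spots sits before position `i` in sorted order
    have : (i : ℕ) + 1 ≤ #(Iio i) := calc
      (i : ℕ) + 1 ≤ #{j | α j ∈ Icc 1 ((i : ℕ) + 1)} := h _ i.isLt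
      _ ≤ #(Iio i) := by
        refine card_le_card_of_injOn (Tuple.sort α).symm (fun j hj => ?_)
          (Tuple.sort α).symm.injective.injOn
        have hj := (mem_Icc.1 (mem_filter.1 hj).2).2
        rw [coe_Iio, Set.mem_Iio]
        by_contra! hji
        have := Tuple.monotone_sort α hji
        rw [Function.comp_apply, Function.comp_apply, Equiv.apply_symm_apply] at this
        omega
    simp at this

section CyclicParking

variable {n : ℕ}

def parkingExcess (f : Fin n → ZMod (n + 1)) (k : ℕ) : ℤ :=
  ∑ j ∈ range k, ((#{i | f i = ((j + 1 : ℕ) : ZMod (n + 1))} : ℤ) - 1)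

theorem parkingExcess_add_period (f : Fin n → ZMod (n + 1)) (k : ℕ) :
    parkingExcess f (k + (n + 1)) = parkingExcess f k - 1 := by
  have hfib : ∑ x, #{i | f i = x} = n := by
    simpa using (card_eq_sum_card_fiberwise (f := f) (s := univ) (t := univ) (by simp)).symm
  have hcycle :
      ∑ j ∈ range (n + 1), (#{i | f i = ((k + j + 1 : ℕ) : ZMod (n + 1))} : ℤ) = n := by
    simp_rw [add_right_comm k _ 1, Nat.cast_add (k + 1)]
    rw [sum_range_add_natCast (fun x => (#{i | f i = x} : ℤ))]
    exact_mod_cast hfib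
  rw [parkingExcess, sum_range_add, ← parkingExcess, sum_sub_distrib, hcycle]
  simp only [sum_const, card_range, nsmul_one]
  push_cast
  ring

theorem parkingExcess_neg_vadd (f : Fin n → ZMod (n + 1)) (t k : ℕ) :
    parkingExcess (-(t : ZMod (n + 1)) +ᵥ f) k = parkingExcess f (t + k) - parkingExcess f t := by
  simp only [parkingExcess, sum_range_add, add_sub_cancel_left]
  refine sum_congr rfl fun j _ => ?_
  simp only [Pi.vadd_apply, vadd_eq_add, neg_add_eq_iff_eq_add]
  push_cast
  ring_nf

theorem card_filter_val_mem_Icc (f : Fin n → ZMod (n + 1)) {k : ℕ} (hk : k ≤ n) :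
    #{i | (f i).val ∈ Icc 1 k} =
      ∑ j ∈ range k, #{i | f i = ((j + 1 : ℕ) : ZMod (n + 1))} := by
  rw [card_eq_sum_card_fiberwise (f := fun i => (f i).val - 1) (t := range k)
    fun i hi => by
      simp only [mem_Icc, coe_filter, mem_univ, true_and, Set.mem_ofPred_eq, coe_range,
        Set.mem_Iio] at hi ⊢
      omega]
  refine sum_congr rfl fun j hj => ?_
  rw [filter_filter]
  refine congrArg card (filter_congr fun i _ => ?_)
  have hjk := mem_range.1 hj
  rw [mem_Icc, ← (ZMod.val_injective _).eq_iff, ZMod.val_cast_of_lt (by omega)]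
  omega

theorem isParkingFunction_val_iff (f : Fin n → ZMod (n + 1)) :
    IsParkingFunction n (fun i => (f i).val) ↔ ∀ k ≤ n, 0 ≤ parkingExcess f k := by
  rw [isParkingFunction_iff_le_card]
  refine forall₂_congr fun k hk => ?_
  rw [card_filter_val_mem_Icc f hk, parkingExcess, sum_sub_distrib]
  simp only [sum_const, card_range, nsmul_one, sub_nonneg]
  norm_cast

theorem existsUnique_vadd_isParkingFunction (f : Fin n → ZMod (n + 1)) :
    ∃! g : ZMod (n + 1), IsParkingFunction n (fun i => (g +ᵥ f) i |>.val) := by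
  have key : ∀ t : ℕ, IsParkingFunction n (fun i => (-(t : ZMod (n + 1)) +ᵥ f) i |>.val) ↔
      ∀ k < n + 1, parkingExcess f t ≤ parkingExcess f (t + k) := by
    intro t
    simp_rw [isParkingFunction_val_iff, parkingExcess_neg_vadd, sub_nonneg, Nat.lt_succ_iff]
  obtain ⟨t, ⟨-, hgood⟩, huniq⟩ := cycle_lemma (Nat.succ_pos n) (parkingExcess_add_period f)
  refine ⟨-t, (key t).2 hgood, fun g hg => ?_⟩
  have hg' := (key (-g).val).1 (by rwa [ZMod.natCast_zmod_val, neg_neg])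
  rw [← huniq _ ⟨(-g).val_lt, hg'⟩, ZMod.natCast_zmod_val, neg_neg]

end CyclicParking

theorem card_isParkingFunction_eq_card_val (n : ℕ) :
    Nat.card {α // IsParkingFunction n α} =
      Nat.card {f : Fin n → ZMod (n + 1) // IsParkingFunction n (fun i => (f i).val)} := by
  refine (Nat.card_eq_of_bijective (fun f => ⟨fun i => (f.1 i).val, f.2⟩) ⟨?_, ?_⟩).symm
  · rintro ⟨f, _⟩ ⟨f', _⟩ hff'
    exact Subtype.ext <| funext fun i =>
      ZMod.val_injective _ (congrFun (congrArg Subtype.val hff') i)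
  · rintro ⟨α, hα⟩
    have hval : (fun i => ((α i : ZMod (n + 1))).val) = α :=
      funext fun i => ZMod.val_cast_of_lt (Nat.lt_succ_of_le (hα.1 i).2)
    refine ⟨⟨fun i => α i, ?_⟩, Subtype.ext hval⟩
    rwa [hval]

theorem card_parkingFunctions_general (n : ℕ) :
    Nat.card {α : Fin n → ℕ // IsParkingFunction n α} = (n + 1) ^ (n - 1) := by
  have h := card_subtype_mul_card_of_existsUnique_vadd
    (P := fun f : Fin n → ZMod (n + 1) => IsParkingFunction n fun i => (f i).val)
    existsUnique_vadd_isParkingFunction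
  rw [← card_isParkingFunction_eq_card_val, Nat.card_zmod, Nat.card_fun, Nat.card_zmod,
    Nat.card_fin] at h
  cases n with
  | zero => simpa using h
  | succ n => exact Nat.eq_of_mul_eq_mul_right (Nat.succ_pos _) (by rwa [← pow_succ])

/-- The number of parking functions of length `n` is `(n+1)^(n-1)`. -/
theorem card_parkingFunctions (n : ℕ) (hn : 1 ≤ n) :
    Nat.card {α : Fin n → ℕ // IsParkingFunction n α} = (n + 1) ^ (n - 1) :=
  card_parkingFunctions_general n
end

section
/- For every n >= 1, the number of unit interval parking functions of length n equals the n-th Fubini number, i.e., the number of ordered set partitions of [n]. -/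
/-- The Fubini numbers (numbers of ordered set partitions of `[n]`):
`Fub 0 = 1` and `Fub n = ∑_{k=1}^n C(n,k) * Fub (n-k)`. -/
def Fub : ℕ → ℕ
  | 0 => 1
  | n + 1 => ∑ k ∈ Finset.range (n + 1), Nat.choose (n + 1) (k + 1) * Fub (n - k)
decreasing_by exact Nat.lt_succ_of_le (Nat.sub_le n k)

def IsParkingOutcome (n : ℕ) (α : Fin n → ℕ) (spot : Fin n → Fin n) : Prop :=
  Function.Bijective spot ∧
    ∀ i : Fin n,
      α i ≤ (spot i : ℕ) + 1 ∧
      ∀ s : Fin n, α i ≤ (s : ℕ) + 1 → (s : ℕ) < (spot i : ℕ) →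
        ∃ j : Fin n, j < i ∧ spot j = s

/-- A unit interval parking function: a parking function in which every car parks in
its preferred spot or in the spot immediately after it. -/
def IsUnitIntervalPF (n : ℕ) (α : Fin n → ℕ) : Prop :=
  (∀ i, 1 ≤ α i ∧ α i ≤ n) ∧
    ∃ spot : Fin n → Fin n, IsParkingOutcome n α spot ∧ ∀ i, (spot i : ℕ) ≤ α i

open Finset

/-!
A competition ranking `c` of a finite set (`c i` is the number of elements ranked strictly
below `i`) is the same thing as an ordered set partition: its blocks are the level sets of `c`.
Removing the block of rank `0` and shifting the rest down shows that rankings are counted by the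
Fubini recurrence.

Rankings of the cars `Fin n` correspond to unit interval parking functions. Given `c`, let the
cars park in the lexicographic order of `(c i, i)`: the first car of each block prefers its own
spot and every other car prefers the spot of the previous car of its block, which is taken.
Conversely, in a unit interval parking function the spots split into runs, each starting at a
lucky spot (one whose car got its preference); inside a run every car was pushed from the spot of
its predecessor, so cars park in arrival order, and `c i` is recovered as the start of the run
containing the spot of car `i`.
-/

section Counting

variable {β γ : Type*} [Fintype β] [LinearOrder γ]

lemma card_filter_lt_lt_card (f : β → γ) (i : β) :
    #{j | f j < f i} < Fintype.card β :=
  card_lt_univ_of_notMem (x := i) (by simp)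

lemma card_filter_lt_lt_card_filter_lt_iff (f : β → γ) {a b : β} :
    #{j | f j < f a} < #{j | f j < f b} ↔ f a < f b := by
  constructor
  · intro h
    by_contra! hba
    refine (card_le_card fun j hj => ?_).not_gt h
    simp only [mem_filter, mem_univ, true_and] at hj ⊢
    exact hj.trans_le hba
  · intro hab
    refine card_lt_card ⟨fun j hj => ?_, fun h => ?_⟩
    · simp only [mem_filter, mem_univ, true_and] at hj ⊢
      exact hj.trans hab
    · have := h (show a ∈ _ by simpa using hab)
      simp at this

lemma card_filter_lt_injective {f : β → γ}
    (hf : Function.Injective f) : Function.Injective fun i => #{j | f j < f i} := by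
  intro a b h
  by_contra hab
  rcases lt_or_gt_of_ne (hf.ne hab) with hlt | hlt
  · exact ((card_filter_lt_lt_card_filter_lt_iff f).2 hlt).ne h
  · exact ((card_filter_lt_lt_card_filter_lt_iff f).2 hlt).ne' h

lemma card_filter_val_lt_of_bijective {n : ℕ} {f : β → Fin n}
    (hf : Function.Bijective f) {m : ℕ} (hm : m ≤ n) : #{j | (f j : ℕ) < m} = m := by
  rw [card_equiv (Equiv.ofBijective f hf) (t := {t : Fin n | (t : ℕ) < m}) (by simp),
    Fin.card_filter_val_lt, min_eq_right hm]

lemma card_filter_eq_card_add_card_filter_compl [DecidableEq β] (S : Finset β) {p : β → Prop}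
    [DecidablePred p] (hS : ∀ x ∈ S, p x) :
    #{j | p j} = #S + #{j : {x // x ∉ S} | p j} := by
  simp only [card_filter, ← Fintype.sum_subtype_add_sum_subtype (· ∈ S)]
  congr 1
  simp [fun x : {x // x ∈ S} => hS x.1 x.2]

lemma Fub_succ_eq_sum_finset {n : ℕ} (h : Fintype.card β = n + 1) :
    Fub (n + 1) = ∑ S : Finset β, if #S = 0 then 0 else Fub (n + 1 - #S) := by
  rw [← powerset_univ, sum_powerset_apply_card (fun m => if m = 0 then 0 else Fub (n + 1 - m)),
    card_univ, h, sum_range_succ', Fub]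
  simp

end Counting

section CompetitionRanking

variable {β : Type*} [Fintype β]

def IsCompetitionRanking (c : β → ℕ) : Prop :=
  ∀ i, c i = #{j | c j < c i}

lemma IsCompetitionRanking.lt_card {c : β → ℕ} (hc : IsCompetitionRanking c) (i : β) :
    c i < Fintype.card β :=
  hc i ▸ card_filter_lt_lt_card c i

instance : Finite {c : β → ℕ // IsCompetitionRanking c} :=
  Finite.of_injective (fun c i => (⟨c.1 i, c.2.lt_card i⟩ : Fin (Fintype.card β)))
    fun _ _ h => Subtype.ext <| funext fun i => congrArg Fin.val (congrFun h i)

lemma IsCompetitionRanking.exists_eq_zero [Nonempty β] {c : β → ℕ}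
    (hc : IsCompetitionRanking c) : ∃ i, c i = 0 := by
  obtain ⟨i, -, hi⟩ := exists_min_image univ c univ_nonempty
  refine ⟨i, ?_⟩
  rw [hc i, card_eq_zero, filter_eq_empty_iff]
  exact fun j _ => not_lt.2 (hi j (mem_univ j))

variable [DecidableEq β]

lemma IsCompetitionRanking.eq_card_add_card_filter_compl {c : β → ℕ}
    (hc : IsCompetitionRanking c) {S : Finset β} (hS : ∀ x, x ∈ S ↔ c x = 0)
    (x : {x // x ∉ S}) :
    c x = #S + #{j : {x // x ∉ S} | c j < c x} := by
  have hx := hc x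
  rwa [card_filter_eq_card_add_card_filter_compl S] at hx
  intro y hy
  rw [(hS y).1 hy]
  exact Nat.pos_of_ne_zero fun h => x.2 ((hS x).2 h)

lemma IsCompetitionRanking.restrict {c : β → ℕ} (hc : IsCompetitionRanking c) {S : Finset β}
    (hS : ∀ x, x ∈ S ↔ c x = 0) :
    IsCompetitionRanking fun x : {x // x ∉ S} => c x - #S := by
  have hsplit := hc.eq_card_add_card_filter_compl hS
  intro x
  show c x - #S = #{j : {x // x ∉ S} | c j - #S < c x - #S}
  rw [hsplit x, Nat.add_sub_cancel_left]
  congr 1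
  ext j
  simp only [mem_filter, mem_univ, true_and]
  have := hsplit j
  have := hsplit x
  omega

lemma IsCompetitionRanking.extend {S : Finset β} (hS : S.Nonempty) {c : {x // x ∉ S} → ℕ}
    (hc : IsCompetitionRanking c) :
    IsCompetitionRanking fun x => if h : x ∈ S then 0 else c ⟨x, h⟩ + #S := by
  intro x
  by_cases hx : x ∈ S
  · simp [hx]
  · rw [card_filter_eq_card_add_card_filter_compl S (fun y hy => by simp [hx, hy, hS.card_pos])]
    simp only [hx, dite_false, Subtype.coe_eta]
    conv_lhs => rw [add_comm, hc ⟨x, hx⟩]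
    congr 2
    ext j
    simp [j.2]

def competitionRankingZerosEquiv {S : Finset β} (hS : S.Nonempty) :
    {c : {c : β → ℕ // IsCompetitionRanking c} // ({x | c.1 x = 0} : Finset β) = S} ≃
      {c : {x // x ∉ S} → ℕ // IsCompetitionRanking c} where
  toFun c := ⟨_, c.1.2.restrict fun x => by simp [← c.2]⟩
  invFun c := ⟨⟨_, c.2.extend hS⟩, by
    ext x
    by_cases hx : x ∈ S <;> simp [hx, hS.ne_empty]⟩
  left_inv := by
    rintro ⟨⟨c, hc⟩, rfl⟩
    ext x
    by_cases hx : c x = 0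
    · simp [hx]
    · have := hc.eq_card_add_card_filter_compl (S := {x | c x = 0}) (by simp) ⟨x, by simpa⟩
      dsimp only at this
      simp [hx]
      omega
  right_inv c := by ext x; simp [x.2]

theorem card_competitionRanking (β : Type*) [Fintype β] :
    Nat.card {c : β → ℕ // IsCompetitionRanking c} = Fub (Fintype.card β) := by
  obtain ⟨n, h⟩ : ∃ n, Fintype.card β = n := ⟨_, rfl⟩
  rw [h]
  induction n using Nat.strong_induction_on generalizing β with
  | _ n ih =>
  classical
  rcases n with _ | n
  · have := Fintype.card_eq_zero_iff.1 h
    rw [Fub, Nat.card_eq_one_iff_unique]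
    exact ⟨inferInstance, ⟨⟨isEmptyElim, fun i => isEmptyElim i⟩⟩⟩
  have : Nonempty β := Fintype.card_pos_iff.1 (by omega)
  let zeros (c : {c : β → ℕ // IsCompetitionRanking c}) : Finset β := {x | c.1 x = 0}
  rw [← Nat.card_congr (Equiv.sigmaFiberEquiv zeros), Nat.card_sigma, Fub_succ_eq_sum_finset h]
  refine sum_congr rfl fun S _ => ?_
  split_ifs with hS
  · refine Nat.card_eq_zero.2 (Or.inl ⟨fun ⟨⟨c, hc⟩, hcS⟩ => ?_⟩)
    obtain ⟨i, hi⟩ := hc.exists_eq_zero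
    have : i ∈ S := hcS ▸ by simpa [zeros] using hi
    simp [card_eq_zero.1 hS] at this
  · rw [Nat.card_congr (competitionRankingZerosEquiv (card_ne_zero.1 hS)),
      ih (n + 1 - #S) (by omega) _ (by rw [Fintype.card_subtype_compl, h, Fintype.card_coe])]

end CompetitionRanking

section Parking

variable {n : ℕ}

def lexRank (c : Fin n → ℕ) (i : Fin n) : Fin n :=
  ⟨#{j | toLex (c j, j) < toLex (c i, i)}, by
    simpa using card_filter_lt_lt_card (fun j => toLex (c j, j)) i⟩

lemma lexRank_lt_lexRank_iff {c : Fin n → ℕ} {a b : Fin n} :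
    lexRank c a < lexRank c b ↔ c a < c b ∨ c a = c b ∧ a < b :=
  Fin.lt_def.trans <| (card_filter_lt_lt_card_filter_lt_iff fun j => toLex (c j, j)).trans
    Prod.Lex.toLex_lt_toLex

lemma lexRank_bijective (c : Fin n → ℕ) : Function.Bijective (lexRank c) :=
  Finite.injective_iff_bijective.1 fun _ _ h => card_filter_lt_injective
    (fun _ _ h => congrArg (fun p => (ofLex p).2) h : Function.Injective fun i => toLex (c i, i))
    (congrArg Fin.val h)

lemma lexRank_lt_lexRank_of_lt {c : Fin n → ℕ} {i j : Fin n} (hji : j < i) (hc : c j = c i) :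
    (lexRank c j : ℕ) < lexRank c i :=
  Fin.lt_def.1 (lexRank_lt_lexRank_iff.2 (Or.inr ⟨hc, hji⟩))

/-- Car `i` parks in spot `lexRank c i` (spots `0, …, n - 1`, preferences `1, …, n`): it prefers
that spot if it comes first among the cars of its rank, and the spot just before otherwise. -/
def ofRanking (c : Fin n → ℕ) (i : Fin n) : ℕ :=
  if ∃ j < i, c j = c i then lexRank c i else lexRank c i + 1

lemma isParkingOutcome_ofRanking (c : Fin n → ℕ) :
    IsParkingOutcome n (ofRanking c) (lexRank c) := by
  refine ⟨lexRank_bijective c, fun i => ⟨by unfold ofRanking; split_ifs <;> omega, ?_⟩⟩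
  intro s hs hsi
  unfold ofRanking at hs
  split_ifs at hs with hi
  · -- the spot `s` just before car `i`'s is taken by a car `k` of the same rank, hence earlier
    obtain ⟨j, hji, hj⟩ := hi
    obtain ⟨k, rfl⟩ := (lexRank_bijective c).2 s
    refine ⟨k, ?_, rfl⟩
    have hjk : ¬ lexRank c k < lexRank c j := by
      have := lexRank_lt_lexRank_of_lt hji hj
      rw [Fin.lt_def]
      omega
    rw [← Fin.lt_def, lexRank_lt_lexRank_iff] at hsi
    rw [lexRank_lt_lexRank_iff] at hjk
    omega
  · omega

lemma isUnitIntervalPF_ofRanking (c : Fin n → ℕ) : IsUnitIntervalPF n (ofRanking c) := by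
  refine ⟨fun i => ?_, _, isParkingOutcome_ofRanking c, fun i => ?_⟩ <;>
    have := (lexRank c i).isLt <;> unfold ofRanking <;> split_ifs with hi <;> try omega
  obtain ⟨j, hji, hj⟩ := hi
  have := lexRank_lt_lexRank_of_lt hji hj
  omega

def IsLuckySpot (α : Fin n → ℕ) (spot : Fin n → Fin n) (m : ℕ) : Prop :=
  ∃ j, (spot j : ℕ) = m ∧ α j = m + 1

instance (α : Fin n → ℕ) (spot : Fin n → Fin n) : DecidablePred (IsLuckySpot α spot) :=
  fun _ => by unfold IsLuckySpot; infer_instance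

def toRanking (α : Fin n → ℕ) (spot : Fin n → Fin n) (i : Fin n) : ℕ :=
  Nat.findGreatest (IsLuckySpot α spot) (spot i)

namespace IsCompetitionRanking

variable {c : Fin n → ℕ}

lemma lexRank_eq (hc : IsCompetitionRanking c) (i : Fin n) :
    (lexRank c i : ℕ) = c i + #{j | c j = c i ∧ j < i} := by
  calc (lexRank c i : ℕ) = #{j | c j < c i ∨ c j = c i ∧ j < i} := by
        simp only [lexRank, Prod.Lex.toLex_lt_toLex]
    _ = c i + #{j | c j = c i ∧ j < i} := by
        rw [filter_or, card_union_of_disjoint (disjoint_filter.2 fun _ _ h h' => h.ne h'.1),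
          ← hc i]

lemma lexRank_lt_of_lt (hc : IsCompetitionRanking c) {i j : Fin n} (hij : c i < c j) :
    (lexRank c i : ℕ) < c j := by
  rw [hc j]
  refine card_lt_card (s := {k | toLex (c k, k) < toLex (c i, i)}) ⟨fun k hk => ?_, fun h => ?_⟩
  · simp only [mem_filter, mem_univ, true_and, Prod.Lex.toLex_lt_toLex] at hk ⊢
    omega
  · have := h (show i ∈ _ by simpa using hij)
    simp at this

lemma lexRank_eq_iff (hc : IsCompetitionRanking c) (i : Fin n) :
    (lexRank c i : ℕ) = c i ↔ ¬ ∃ j < i, c j = c i := by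
  simp [hc.lexRank_eq, filter_eq_empty_iff, and_comm]

lemma toRanking_ofRanking (hc : IsCompetitionRanking c) :
    toRanking (ofRanking c) (lexRank c) = c := by
  funext i
  refine Nat.findGreatest_eq_iff.2
    ⟨le_self_add.trans_eq (hc.lexRank_eq i).symm, fun _ => ?_, ?_⟩
  · obtain ⟨j, hj⟩ :=
      (lexRank_bijective c).2 ⟨c i, (hc.lt_card i).trans_eq (Fintype.card_fin n)⟩
    replace hj : (lexRank c j : ℕ) = c i := congrArg Fin.val hj
    have hji : ¬ lexRank c i < lexRank c j := by
      rw [Fin.lt_def, hj, hc.lexRank_eq i]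
      omega
    have hcj : c j = c i := by
      rw [lexRank_lt_lexRank_iff] at hji
      refine le_antisymm (by omega) (not_lt.1 fun hlt => ?_)
      have := hc.lexRank_lt_of_lt hlt
      omega
    have hfirst := (hc.lexRank_eq_iff j).1 (by rw [hj, hcj])
    exact ⟨j, by rw [hj], by simp [ofRanking, hfirst, hj]⟩
  · rintro u hiu hu ⟨j, rfl, hj⟩
    have hfirst : ¬ ∃ k < j, c k = c j := by
      intro h
      simp [ofRanking, h] at hj
    rw [(hc.lexRank_eq_iff j).2 hfirst] at hiu hu
    have := hc.lexRank_lt_of_lt hiu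
    omega

end IsCompetitionRanking

namespace IsParkingOutcome

variable {α : Fin n → ℕ} {spot : Fin n → Fin n}

lemma not_lt_of_eqOn_lt {spot' : Fin n → Fin n} (h : IsParkingOutcome n α spot)
    (h' : IsParkingOutcome n α spot') {i : Fin n} (heq : ∀ j < i, spot j = spot' j) :
    ¬ spot' i < spot i := fun hlt => by
  obtain ⟨j, hji, hj⟩ := (h.2 i).2 (spot' i) (h'.2 i).1 hlt
  exact hji.ne (h'.1.1 ((heq j hji).symm.trans hj))

lemma unique {spot' : Fin n → Fin n} (h : IsParkingOutcome n α spot)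
    (h' : IsParkingOutcome n α spot') : spot = spot' := by
  funext i
  induction i using WellFoundedLT.induction with
  | _ i ih =>
  exact le_antisymm (not_lt.1 (h.not_lt_of_eqOn_lt h' ih))
    (not_lt.1 (h'.not_lt_of_eqOn_lt h fun j hj => (ih j hj).symm))

lemma isLuckySpot_zero (h : IsParkingOutcome n α spot) (hpos : ∀ i, 1 ≤ α i) (hn : 0 < n) :
    IsLuckySpot α spot 0 := by
  obtain ⟨j, hj⟩ := h.1.2 ⟨0, hn⟩
  have hj0 : (spot j : ℕ) = 0 := by simp [hj]
  have := (h.2 j).1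
  have := hpos j
  exact ⟨j, hj0, by omega⟩

lemma exists_lt_of_not_isLuckySpot (h : IsParkingOutcome n α spot) (hpos : ∀ i, 1 ≤ α i)
    {j : Fin n} (hj : ¬ IsLuckySpot α spot (spot j)) :
    ∃ k < j, (spot k : ℕ) + 1 = spot j := by
  have hαj : α j ≤ spot j := by
    have := (h.2 j).1
    have : α j ≠ spot j + 1 := fun he => hj ⟨j, rfl, he⟩
    omega
  have := hpos j
  obtain ⟨k, hkj, hk⟩ := (h.2 j).2 ⟨spot j - 1, by omega⟩ (by simp only; omega)
    (by simp only; omega)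
  exact ⟨k, hkj, by rw [hk]; simp only; omega⟩

lemma lt_of_spot_lt (h : IsParkingOutcome n α spot) (hpos : ∀ i, 1 ≤ α i) {a b : Fin n}
    (hab : (spot a : ℕ) < spot b)
    (hu : ∀ u, (spot a : ℕ) < u → u ≤ spot b → ¬ IsLuckySpot α spot u) : a < b := by
  induction hb : (spot b : ℕ) using Nat.strong_induction_on generalizing b with
  | _ m ih =>
  subst hb
  obtain ⟨k, hkb, hk⟩ := h.exists_lt_of_not_isLuckySpot hpos (hu _ hab le_rfl)
  rcases eq_or_lt_of_le (Nat.le_of_lt_succ (hk ▸ hab)) with hak | hak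
  · exact h.1.1 (Fin.ext hak) ▸ hkb
  · exact (ih _ (by omega) hak (fun u hau hu' => hu u hau (by omega)) rfl).trans hkb

lemma toRanking_le_spot (i : Fin n) : toRanking α spot i ≤ spot i :=
  Nat.findGreatest_le _

lemma le_toRanking {i : Fin n} {u : ℕ} (hu : IsLuckySpot α spot u) (hui : u ≤ spot i) :
    u ≤ toRanking α spot i :=
  Nat.le_findGreatest hui hu

lemma isLuckySpot_toRanking (h : IsParkingOutcome n α spot) (hpos : ∀ i, 1 ≤ α i)
    (i : Fin n) :
    IsLuckySpot α spot (toRanking α spot i) :=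
  Nat.findGreatest_spec (Nat.zero_le _) (h.isLuckySpot_zero hpos i.pos)

lemma toRanking_lt_iff (h : IsParkingOutcome n α spot) (hpos : ∀ i, 1 ≤ α i) {i j : Fin n} :
    toRanking α spot j < toRanking α spot i ↔ (spot j : ℕ) < toRanking α spot i := by
  refine ⟨fun hji => not_le.1 fun hij => hji.not_ge ?_,
    fun hji => (toRanking_le_spot j).trans_lt hji⟩
  exact le_toRanking (h.isLuckySpot_toRanking hpos i) hij

lemma isCompetitionRanking_toRanking (h : IsParkingOutcome n α spot) (hpos : ∀ i, 1 ≤ α i) :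
    IsCompetitionRanking (toRanking α spot) := fun i => by
  simp_rw [h.toRanking_lt_iff hpos]
  exact (card_filter_val_lt_of_bijective h.1
    ((toRanking_le_spot i).trans (spot i).isLt.le)).symm

lemma lt_of_spot_lt_of_toRanking_le (h : IsParkingOutcome n α spot) (hpos : ∀ i, 1 ≤ α i)
    {a b : Fin n} (hab : (spot a : ℕ) < spot b) (hb : toRanking α spot b ≤ spot a) : a < b :=
  h.lt_of_spot_lt hpos hab fun _ hau hub hu => by
    have := le_toRanking hu hub
    omega

lemma spot_lt_spot_iff (h : IsParkingOutcome n α spot) (hpos : ∀ i, 1 ≤ α i) {i j : Fin n} :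
    spot j < spot i ↔ toRanking α spot j < toRanking α spot i ∨
      toRanking α spot j = toRanking α spot i ∧ j < i := by
  have hlex : ∀ {i j : Fin n}, spot j < spot i → toRanking α spot j < toRanking α spot i ∨
      toRanking α spot j = toRanking α spot i ∧ j < i := fun {i j} hji => by
    rw [Fin.lt_def] at hji
    have hle := le_toRanking (h.isLuckySpot_toRanking hpos j) ((toRanking_le_spot j).trans hji.le)
    rcases hle.lt_or_eq with hlt | heq
    · exact Or.inl hlt
    · exact Or.inr
        ⟨heq, h.lt_of_spot_lt_of_toRanking_le hpos hji (heq ▸ toRanking_le_spot j)⟩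
  refine ⟨hlex, fun hji => ?_⟩
  rcases lt_trichotomy (spot j) (spot i) with hlt | heq | hgt
  · exact hlt
  · rw [h.1.1 heq] at hji
    simp at hji
  · have := hlex hgt
    omega

lemma lexRank_toRanking (h : IsParkingOutcome n α spot) (hpos : ∀ i, 1 ≤ α i) :
    lexRank (toRanking α spot) = spot := by
  funext i
  refine Fin.ext ((card_filter_val_lt_of_bijective h.1 (spot i).isLt.le).symm.trans ?_).symm
  simp only [lexRank, Prod.Lex.toLex_lt_toLex, ← h.spot_lt_spot_iff hpos, ← Fin.lt_def]

lemma ofRanking_toRanking (h : IsParkingOutcome n α spot) (hunit : ∀ i, (spot i : ℕ) ≤ α i)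
    (hpos : ∀ i, 1 ≤ α i) : ofRanking (toRanking α spot) = α := by
  funext i
  have hc := h.isCompetitionRanking_toRanking hpos
  have hlucky : α i = spot i + 1 ↔ toRanking α spot i = spot i := by
    refine ⟨fun hi => (toRanking_le_spot i).antisymm (le_toRanking ⟨i, rfl, hi⟩ le_rfl),
      fun hi => ?_⟩
    obtain ⟨j, hj, hαj⟩ := h.isLuckySpot_toRanking hpos i
    rwa [h.1.1 (Fin.ext (hj.trans hi)), hi] at hαj
  have hfirst_iff := hc.lexRank_eq_iff i
  rw [h.lexRank_toRanking hpos] at hfirst_iff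
  have := (h.2 i).1
  have := hunit i
  unfold ofRanking
  rw [h.lexRank_toRanking hpos]
  split_ifs with hfirst
  · have : α i ≠ spot i + 1 := fun hi => hfirst_iff.1 (hlucky.1 hi).symm hfirst
    omega
  · exact (hlucky.2 (hfirst_iff.2 hfirst).symm).symm

end IsParkingOutcome

end Parking

noncomputable def competitionRankingEquivUnitIntervalPF (n : ℕ) :
    {c : Fin n → ℕ // IsCompetitionRanking c} ≃
      {α : Fin n → ℕ // IsUnitIntervalPF n α} :=
  Equiv.ofBijective (fun c => ⟨ofRanking c.1, isUnitIntervalPF_ofRanking c.1⟩) <| by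
    refine ⟨fun ⟨c, hc⟩ ⟨d, hd⟩ hcd => Subtype.ext ?_,
      fun ⟨α, hbound, spot, h, hunit⟩ => ?_⟩
    · replace hcd : ofRanking c = ofRanking d := congrArg Subtype.val hcd
      have hspot := (isParkingOutcome_ofRanking c).unique (hcd ▸ isParkingOutcome_ofRanking d)
      change c = d
      rw [← hc.toRanking_ofRanking, ← hd.toRanking_ofRanking, hcd, hspot]
    · have hpos i : 1 ≤ α i := (hbound i).1
      exact ⟨⟨_, h.isCompetitionRanking_toRanking hpos⟩,
        Subtype.ext (h.ofRanking_toRanking hunit hpos)⟩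

theorem card_unitIntervalPF_general (n : ℕ) :
    Nat.card {α : Fin n → ℕ // IsUnitIntervalPF n α} = Fub n := by
  rw [← Nat.card_congr (competitionRankingEquivUnitIntervalPF n), card_competitionRanking,
    Fintype.card_fin]

/-- The number of unit interval parking functions of length `n` is the `n`-th
Fubini number. -/
theorem card_unitIntervalPF (n : ℕ) (hn : 1 ≤ n) :
    Nat.card {α : Fin n → ℕ // IsUnitIntervalPF n α} = Fub n :=
  card_unitIntervalPF_general n
end

section
/- The map psi sending a unit interval parking function alpha with block structure pi_1 | pi_2 | ... | pi_k to the word w with w_i = j whenever alpha_i lies in block pi_j is a bijection from unit interval parking functions of length n to Cayley permutations of length n, and it preserves the inversion set: Inv(psi(alpha)) = Inv(alpha). -/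
def IsCayley (n : ℕ) (w : Fin n → ℕ) : Prop :=
  (∀ i, 1 ≤ w i) ∧ ∀ (i : Fin n) (v : ℕ), 1 ≤ v → v ≤ w i → ∃ j, w j = v

def psi (n : ℕ) (α : Fin n → ℕ) : Fin n → ℕ := fun i =>
  ((Finset.Icc 1 (α i)).filter
    (fun m => (Finset.univ.filter (fun j : Fin n => α j < m)).card = m - 1)).card

open Finset

section

section CountInInterval

variable (P : ℕ → Prop) [DecidablePred P]

lemma card_filter_Icc_one_mono {a b : ℕ} (h : a ≤ b) :
    #{m ∈ Icc 1 a | P m} ≤ #{m ∈ Icc 1 b | P m} :=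
  card_le_card (filter_subset_filter _ (Icc_subset_Icc_right h))

lemma card_filter_Icc_one_lt_iff {a b : ℕ} :
    #{m ∈ Icc 1 a | P m} < #{m ∈ Icc 1 b | P m} ↔ ∃ m, a < m ∧ m ≤ b ∧ P m := by
  constructor
  · intro h
    by_contra! hno
    refine h.not_ge (card_le_card fun m hm => ?_)
    simp only [mem_filter, mem_Icc] at hm ⊢
    exact ⟨⟨hm.1.1, not_lt.1 fun ham => hno m ham hm.1.2 hm.2⟩, hm.2⟩
  · rintro ⟨m, ham, hmb, hm⟩
    refine card_lt_card ((ssubset_iff_of_subset ?_).2 ⟨m, ?_, ?_⟩)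
    · exact filter_subset_filter _ (Icc_subset_Icc_right (by omega))
    · simp only [mem_filter, mem_Icc]
      exact ⟨⟨by omega, hmb⟩, hm⟩
    · simp only [mem_filter, mem_Icc]
      omega

lemma card_filter_Icc_one_succ_le (a : ℕ) :
    #{m ∈ Icc 1 (a + 1) | P m} ≤ #{m ∈ Icc 1 a | P m} + 1 := by
  rw [← insert_Icc_right_eq_Icc_add_one (by omega), filter_insert]
  split_ifs
  · exact card_insert_le _ _
  · omega

lemma exists_card_filter_Icc_one_eq {a v : ℕ} (hv : 1 ≤ v) (hva : v ≤ #{m ∈ Icc 1 a | P m}) :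
    ∃ m, 1 ≤ m ∧ m ≤ a ∧ P m ∧ #{k ∈ Icc 1 m | P k} = v := by
  induction a with
  | zero => simp at hva; omega
  | succ a ih =>
    by_cases hle : v ≤ #{m ∈ Icc 1 a | P m}
    · obtain ⟨m, h1, h2, hm, hcard⟩ := ih hle
      exact ⟨m, h1, by omega, hm, hcard⟩
    · obtain ⟨m, ham, hma, hm⟩ :=
        (card_filter_Icc_one_lt_iff P (a := a) (b := a + 1)).1 (by omega)
      have := card_filter_Icc_one_succ_le P a
      obtain rfl : m = a + 1 := by omega
      exact ⟨a + 1, by omega, le_rfl, hm, by omega⟩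

end CountInInterval

variable {n : ℕ}

def numBelow (α : Fin n → ℕ) (m : ℕ) : ℕ := #{j | α j < m}

def IsBlockStart (α : Fin n → ℕ) (m : ℕ) : Prop := numBelow α m = m - 1

instance (α : Fin n → ℕ) : DecidablePred (IsBlockStart α) :=
  fun m => inferInstanceAs (Decidable (numBelow α m = m - 1))

lemma psi_apply (α : Fin n → ℕ) (i : Fin n) :
    psi n α i = #{m ∈ Icc 1 (α i) | IsBlockStart α m} := rfl

lemma numBelow_le_card (α : Fin n → ℕ) (m : ℕ) : numBelow α m ≤ n :=
  (card_le_univ _).trans_eq (Fintype.card_fin n)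

lemma numBelow_mono (α : Fin n → ℕ) : Monotone (numBelow α) := fun a b hab =>
  card_le_card fun j hj => by
    simp only [mem_filter, mem_univ, true_and] at hj ⊢
    omega

lemma numBelow_add_card_filter {α : Fin n → ℕ} {a b : ℕ} (hab : a ≤ b) :
    numBelow α a + #{j | a ≤ α j ∧ α j < b} = numBelow α b := by
  rw [numBelow, numBelow,
    ← card_union_of_disjoint (disjoint_filter.2 fun j _ h1 h2 => by omega)]
  congr 1
  ext j
  simp only [mem_union, mem_filter, mem_univ, true_and]
  omega

lemma isBlockStart_one {α : Fin n → ℕ} (hpos : ∀ i, 1 ≤ α i) : IsBlockStart α 1 :=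
  card_eq_zero.2 (filter_eq_empty_iff.2 fun j _ => (hpos j).not_gt)

lemma psi_le_psi (α : Fin n → ℕ) {i j : Fin n} (h : α j ≤ α i) : psi n α j ≤ psi n α i :=
  card_filter_Icc_one_mono _ h

lemma psi_lt_psi_iff (α : Fin n → ℕ) {i j : Fin n} :
    psi n α j < psi n α i ↔ ∃ m, α j < m ∧ m ≤ α i ∧ IsBlockStart α m :=
  card_filter_Icc_one_lt_iff _

def blockStart (α : Fin n → ℕ) (v : ℕ) : ℕ := Nat.findGreatest (IsBlockStart α) v

lemma psi_lt_psi_iff_lt_blockStart (α : Fin n → ℕ) {i j : Fin n} :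
    psi n α j < psi n α i ↔ α j < blockStart α (α i) := by
  rw [psi_lt_psi_iff]
  exact ⟨fun ⟨m, hjm, hmi, hm⟩ => hjm.trans_le (Nat.le_findGreatest hmi hm),
    fun h => ⟨_, h, Nat.findGreatest_le _, Nat.findGreatest_of_ne_zero rfl (by omega)⟩⟩

lemma numBelow_psi_apply (α : Fin n → ℕ) (i : Fin n) :
    numBelow (psi n α) (psi n α i) = numBelow α (blockStart α (α i)) :=
  congrArg card (filter_congr fun _ _ => psi_lt_psi_iff_lt_blockStart α)

section Parking

variable {α : Fin n → ℕ} {spot : Fin n → Fin n}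

lemma card_filter_val_apply_lt_of_bijective (hspot : Function.Bijective spot) (m : ℕ) :
    #{i | (spot i : ℕ) < m} = min n m := by
  rw [← Fin.card_filter_val_lt]
  exact card_bijective spot hspot (by simp)

lemma IsParkingOutcome.sub_one_le_numBelow (hout : IsParkingOutcome n α spot) {m : ℕ}
    (hm : m ≤ n + 1) : m - 1 ≤ numBelow α m :=
  calc m - 1 = #{i | (spot i : ℕ) < m - 1} := by
        rw [card_filter_val_apply_lt_of_bijective hout.1]
        omega
    _ ≤ numBelow α m := card_le_card fun i hi => by
        have := (hout.2 i).1
        simp only [mem_filter, mem_univ, true_and] at hi ⊢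
        omega

lemma lt_of_numBelow_eq_self (hspot : Function.Bijective spot) (hsp : ∀ i, (spot i : ℕ) ≤ α i)
    {m : ℕ} (hm : numBelow α m = m) {k : Fin n} (hk : (spot k : ℕ) < m) :
    α k < m := by
  have heq : univ.filter (fun i => α i < m) = univ.filter (fun i => (spot i : ℕ) < m) := by
    refine eq_of_subset_of_card_le (fun i hi => ?_) ?_
    · have := hsp i
      simp only [mem_filter, mem_univ, true_and] at hi ⊢
      omega
    · rw [card_filter_val_apply_lt_of_bijective hspot]
      exact (min_le_right _ _).trans hm.ge
  have hmem : k ∈ univ.filter (fun i => α i < m) := heq ▸ mem_filter.2 ⟨mem_univ k, hk⟩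
  exact (mem_filter.1 hmem).2

lemma IsParkingOutcome.exists_spot_add_one_eq_of_isBlockStart
    (hout : IsParkingOutcome n α spot) {m : ℕ} (hm : 1 ≤ m) (hmn : m ≤ n)
    (hstart : IsBlockStart α m) : ∃ k, α k = m ∧ (spot k : ℕ) + 1 = m := by
  unfold IsBlockStart numBelow at hstart
  obtain ⟨k, hk, hk'⟩ := exists_mem_notMem_of_card_lt_card
    (s := {i | α i < m}) (t := {i | (spot i : ℕ) < m})
    (by rw [card_filter_val_apply_lt_of_bijective hout.1]; omega)
  have := (hout.2 k).1
  simp only [mem_filter, mem_univ, true_and, not_lt] at hk hk'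
  exact ⟨k, by omega, by omega⟩

lemma IsParkingOutcome.exists_lt_spot_add_one_eq (hout : IsParkingOutcome n α spot) {k : Fin n}
    (hk : (spot k : ℕ) = α k) (hpos : 1 ≤ α k) : ∃ k' < k, (spot k' : ℕ) + 1 = α k := by
  obtain ⟨k', hk'k, hk'⟩ :=
    (hout.2 k).2 ⟨α k - 1, by omega⟩ (by simp only; omega) (by simp only; omega)
  exact ⟨k', hk'k, by rw [hk']; simp only; omega⟩

end Parking

namespace IsUnitIntervalPF

variable {α : Fin n → ℕ} (h : IsUnitIntervalPF n α)
include h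

lemma numBelow_le_self (m : ℕ) : numBelow α m ≤ m := by
  obtain ⟨_, spot, hout, hsp⟩ := h
  calc numBelow α m ≤ #{i | (spot i : ℕ) < m} := card_le_card fun i hi => by
        have := hsp i
        simp only [mem_filter, mem_univ, true_and] at hi ⊢
        omega
    _ ≤ m := (card_filter_val_apply_lt_of_bijective hout.1 m).trans_le (min_le_right _ _)

lemma numBelow_eq_self_of_not_isBlockStart {m : ℕ} (hm : m ≤ n + 1)
    (hstart : ¬IsBlockStart α m) : numBelow α m = m := by
  have := h.numBelow_le_self m
  obtain ⟨_, _, hout, _⟩ := h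
  have := hout.sub_one_le_numBelow hm
  unfold IsBlockStart at hstart
  omega

lemma exists_eq_of_isBlockStart {m : ℕ} (hm : 1 ≤ m) (hmn : m ≤ n)
    (hstart : IsBlockStart α m) : ∃ k, α k = m :=
  have ⟨_, _, hout, _⟩ := h
  (hout.exists_spot_add_one_eq_of_isBlockStart hm hmn hstart).imp fun _ hk => hk.1

lemma exists_isBlockStart_of_lt_of_lt {i j : Fin n} (hij : i < j) (hα : α j < α i) :
    ∃ m, α j < m ∧ m ≤ α i ∧ IsBlockStart α m := by
  by_contra! hno
  obtain ⟨hbd, spot, hout, hsp⟩ := id h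
  set a := α i
  set b := α j
  have hb := (hbd j).1
  have ha := (hbd i).2
  have hfull : ∀ m, b < m → m ≤ a → numBelow α m = m := fun m h1 h2 =>
    h.numBelow_eq_self_of_not_isBlockStart (by omega) (hno m h1 h2)
  have hdisplaced : ∀ k, b ≤ (spot k : ℕ) → (spot k : ℕ) < a → α k = spot k := by
    intro k h1 h2
    have := lt_of_numBelow_eq_self hout.1 hsp (hfull (spot k + 1) (by omega) (by omega))
      (k := k) (by omega)
    have := hsp k
    omega
  have hspot_i : (spot i : ℕ) = a := by
    have := (hout.2 i).1
    have := hsp i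
    by_contra hne
    have := lt_of_numBelow_eq_self hout.1 hsp (hfull a hα le_rfl) (k := i) (by omega)
    omega
  have hchain : ∀ t ≤ a - b, ∃ k ≤ i, (spot k : ℕ) = a - t ∧ α k = a - t := by
    intro t
    induction t with
    | zero => exact fun _ => ⟨i, le_rfl, hspot_i, rfl⟩
    | succ t ih =>
      intro ht
      obtain ⟨k, hki, hsk, hαk⟩ := ih (by omega)
      obtain ⟨k', hk'k, hsk'⟩ := hout.exists_lt_spot_add_one_eq (k := k) (by omega) (by omega)
      have := hdisplaced k' (by omega) (by omega)
      exact ⟨k', hk'k.le.trans hki, by omega, by omega⟩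
  obtain ⟨k, hki, hsk, hαk⟩ := hchain (a - b) le_rfl
  obtain ⟨k', hk'k, hsk'⟩ := hout.exists_lt_spot_add_one_eq (k := k) (by omega) (by omega)
  have := (hout.2 j).1
  have := hsp j
  rcases (by omega : (spot j : ℕ) = spot k ∨ (spot j : ℕ) = spot k') with hjk | hjk'
  · exact (hki.trans_lt hij).ne (hout.1.1 (Fin.ext hjk)).symm
  · exact ((hk'k.trans_le hki).trans hij).ne (hout.1.1 (Fin.ext hjk')).symm

lemma psi_lt_psi_iff_of_lt {i j : Fin n} (hij : i < j) :
    psi n α j < psi n α i ↔ α j < α i :=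
  ⟨fun hψ => not_le.1 fun hle => hψ.not_ge (psi_le_psi α hle),
    fun hα => (psi_lt_psi_iff α).2 (h.exists_isBlockStart_of_lt_of_lt hij hα)⟩

lemma isCayley_psi : IsCayley n (psi n α) := by
  refine ⟨fun i => card_pos.2 ⟨1, ?_⟩, fun i v hv hvi => ?_⟩
  · exact mem_filter.2 ⟨mem_Icc.2 ⟨le_rfl, (h.1 i).1⟩, isBlockStart_one fun i => (h.1 i).1⟩
  · obtain ⟨m, hm, hmi, hstart, hcard⟩ := exists_card_filter_Icc_one_eq _ hv hvi
    obtain ⟨k, hk⟩ := h.exists_eq_of_isBlockStart hm (hmi.trans (h.1 i).2) hstart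
    exact ⟨k, by rw [psi_apply, hk]; exact hcard⟩

end IsUnitIntervalPF

lemma IsCayley.le_of_lt_imp_lt {w w' : Fin n → ℕ} (hw : IsCayley n w) (hw' : ∀ i, 1 ≤ w' i)
    (hlt : ∀ i j, w j < w i → w' j < w' i) (i : Fin n) : w i ≤ w' i := by
  induction hwi : w i using Nat.strong_induction_on generalizing i with
  | _ v ih =>
    obtain hv | hv := le_or_gt v 1
    · exact hv.trans (hw' i)
    · obtain ⟨j, hj⟩ := hw.2 i (v - 1) (by omega) (by omega)
      have := ih (v - 1) (by omega) j hj
      have := hlt i j (by omega)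
      omega

section Inverse

variable {w : Fin n → ℕ}

def occurrence (w : Fin n → ℕ) (i : Fin n) : ℕ := #{j | j ≤ i ∧ w j = w i}

-- `occurrence w i - 2` truncates to `0` on the first two occurrences of a value.
def phi (w : Fin n → ℕ) (i : Fin n) : ℕ := numBelow w (w i) + 1 + (occurrence w i - 2)

lemma one_le_occurrence (i : Fin n) : 1 ≤ occurrence w i :=
  card_pos.2 ⟨i, by simp⟩

lemma numBelow_add_occurrence_le (i : Fin n) :
    numBelow w (w i) + occurrence w i ≤ numBelow w (w i + 1) := by
  rw [numBelow, occurrence,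
    ← card_union_of_disjoint (disjoint_filter.2 fun j _ h1 h2 => by omega)]
  exact card_le_card fun j hj => by
    simp only [mem_union, mem_filter, mem_univ, true_and] at hj ⊢
    omega

lemma occurrence_lt_occurrence {i j : Fin n} (hij : i < j) (hw : w i = w j) :
    occurrence w i < occurrence w j := by
  refine card_lt_card ((ssubset_iff_of_subset fun k hk => ?_).2 ⟨j, ?_, ?_⟩)
  · simp only [mem_filter, mem_univ, true_and] at hk ⊢
    exact ⟨hk.1.trans hij.le, hk.2.trans hw⟩
  · simp
  · simp [hij]

lemma exists_lt_occurrence_add_one_eq {i : Fin n} (hi : 2 ≤ occurrence w i) :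
    ∃ j < i, w j = w i ∧ occurrence w j + 1 = occurrence w i := by
  set P : Finset (Fin n) := {j | j < i ∧ w j = w i}
  have hocc : occurrence w i = #P + 1 := by
    rw [occurrence, ← card_insert_of_notMem (s := P) (a := i) (by simp [P])]
    congr 1
    ext j
    simp only [mem_filter, mem_insert, mem_univ, true_and, P, le_iff_eq_or_lt]
    grind
  have hne : P.Nonempty := card_pos.1 (by omega)
  obtain ⟨hj, hjw⟩ : P.max' hne < i ∧ w (P.max' hne) = w i := by simpa [P] using P.max'_mem hne
  refine ⟨P.max' hne, hj, hjw, ?_⟩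
  rw [hocc, occurrence, hjw]
  congr 2
  ext k
  simp only [mem_filter, mem_univ, true_and, P]
  exact ⟨fun hk => ⟨hk.1.trans_lt hj, hk.2⟩,
    fun hk => ⟨P.le_max' k (by simpa [P] using hk), hk.2⟩⟩

def phiSpot (w : Fin n → ℕ) (i : Fin n) : Fin n :=
  ⟨numBelow w (w i) + occurrence w i - 1, by
    have := numBelow_add_occurrence_le (w := w) i
    have := numBelow_le_card w (w i + 1)
    have := one_le_occurrence (w := w) i
    omega⟩

lemma phiSpot_le_phi (i : Fin n) : (phiSpot w i : ℕ) ≤ phi w i := by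
  simp only [phiSpot, phi]
  omega

lemma phi_le_phiSpot_add_one (i : Fin n) : phi w i ≤ phiSpot w i + 1 := by
  have := one_le_occurrence (w := w) i
  simp only [phiSpot, phi]
  omega

lemma phiSpot_lt_phiSpot_of_apply_lt {i j : Fin n} (hw : w i < w j) :
    phiSpot w i < phiSpot w j := by
  have := numBelow_add_occurrence_le (w := w) i
  have := numBelow_mono w (show w i + 1 ≤ w j by omega)
  have := one_le_occurrence (w := w) i
  have := one_le_occurrence (w := w) j
  simp only [Fin.lt_def, phiSpot]
  omega

lemma phiSpot_lt_phiSpot_of_lt {i j : Fin n} (hij : i < j) (hw : w i = w j) :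
    phiSpot w i < phiSpot w j := by
  have := occurrence_lt_occurrence hij hw
  have := one_le_occurrence (w := w) i
  simp only [Fin.lt_def, phiSpot, hw]
  omega

lemma phiSpot_injective : Function.Injective (phiSpot w) := by
  intro i j hij
  by_contra hne
  rcases lt_trichotomy (w i) (w j) with hw | hw | hw
  · exact (phiSpot_lt_phiSpot_of_apply_lt hw).ne hij
  · rcases lt_or_gt_of_ne hne with h | h
    · exact (phiSpot_lt_phiSpot_of_lt h hw).ne hij
    · exact (phiSpot_lt_phiSpot_of_lt h hw.symm).ne' hij
  · exact (phiSpot_lt_phiSpot_of_apply_lt hw).ne' hij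

lemma isParkingOutcome_phi (w : Fin n → ℕ) : IsParkingOutcome n (phi w) (phiSpot w) := by
  refine ⟨Finite.injective_iff_bijective.1 phiSpot_injective,
    fun i => ⟨phi_le_phiSpot_add_one i, fun s hs hsi => ?_⟩⟩
  have := one_le_occurrence (w := w) i
  simp only [phiSpot, phi] at hs hsi
  obtain ⟨j, hji, hwj, hocc⟩ := exists_lt_occurrence_add_one_eq (w := w) (i := i) (by omega)
  refine ⟨j, hji, Fin.ext ?_⟩
  simp only [phiSpot, hwj]
  omega

lemma isUnitIntervalPF_phi (w : Fin n → ℕ) : IsUnitIntervalPF n (phi w) :=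
  ⟨fun i => ⟨by simp only [phi]; omega, (phi_le_phiSpot_add_one i).trans (phiSpot w i).isLt⟩,
    phiSpot w, isParkingOutcome_phi w, phiSpot_le_phi⟩

lemma phi_lt_numBelow_add_one_iff (j : Fin n) (q : ℕ) :
    phi w j < numBelow w q + 1 ↔ w j < q := by
  have := one_le_occurrence (w := w) j
  constructor
  · intro hj
    by_contra! hq
    have := numBelow_mono w hq
    simp only [phi] at hj
    omega
  · intro hq
    have := numBelow_add_occurrence_le (w := w) j
    have := numBelow_mono w (show w j + 1 ≤ q by omega)
    simp only [phi]
    omega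

lemma isBlockStart_phi (q : ℕ) : IsBlockStart (phi w) (numBelow w q + 1) := by
  rw [IsBlockStart, Nat.add_sub_cancel, numBelow, numBelow]
  exact congrArg card (filter_congr fun j _ => phi_lt_numBelow_add_one_iff j q)

lemma psi_phi_lt_psi_phi_iff {i j : Fin n} :
    psi n (phi w) j < psi n (phi w) i ↔ w j < w i := by
  rw [psi_lt_psi_iff]
  constructor
  · rintro ⟨m, hjm, hmi, hstart⟩
    obtain ⟨k, hk, hks⟩ := (isParkingOutcome_phi w).exists_spot_add_one_eq_of_isBlockStart
      (by omega) (hmi.trans ((isUnitIntervalPF_phi w).1 i).2) hstart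
    have hm : m = numBelow w (w k) + 1 := by
      have := one_le_occurrence (w := w) k
      simp only [phi, phiSpot] at hk hks
      omega
    subst hm
    have hki : w k ≤ w i :=
      not_lt.1 fun hik => ((phi_lt_numBelow_add_one_iff i (w k)).2 hik).not_ge hmi
    exact ((phi_lt_numBelow_add_one_iff j (w k)).1 hjm).trans_le hki
  · intro hw
    exact ⟨numBelow w (w i) + 1, (phi_lt_numBelow_add_one_iff j (w i)).2 hw,
      by simp only [phi]; omega, isBlockStart_phi _⟩

lemma psi_phi (hw : IsCayley n w) : psi n (phi w) = w := by
  have hψ := (isUnitIntervalPF_phi w).isCayley_psi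
  funext i
  exact le_antisymm (hψ.le_of_lt_imp_lt hw.1 (fun _ _ => psi_phi_lt_psi_phi_iff.1) i)
    (hw.le_of_lt_imp_lt hψ.1 (fun _ _ => psi_phi_lt_psi_phi_iff.2) i)

end Inverse

namespace IsUnitIntervalPF

variable {α : Fin n → ℕ} (h : IsUnitIntervalPF n α)
include h

lemma one_le_blockStart (i : Fin n) : 1 ≤ blockStart α (α i) :=
  Nat.le_findGreatest (h.1 i).1 (isBlockStart_one fun j => (h.1 j).1)

lemma isBlockStart_blockStart (i : Fin n) : IsBlockStart α (blockStart α (α i)) :=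
  Nat.findGreatest_spec (h.1 i).1 (isBlockStart_one fun j => (h.1 j).1)

lemma eq_of_apply_eq_of_not_isBlockStart {i j : Fin n} (hi : ¬IsBlockStart α (α i))
    (hj : α j = α i) : j = i := by
  have hsplit := numBelow_add_card_filter (α := α) (show α i ≤ α i + 1 by omega)
  have := h.numBelow_eq_self_of_not_isBlockStart (by have := (h.1 i).2; omega) hi
  have := h.numBelow_le_self (α i + 1)
  have hle : #{k | α i ≤ α k ∧ α k < α i + 1} ≤ 1 := by omega
  exact card_le_one.1 hle j (by simp [hj]) i (by simp)

lemma occurrence_psi_le (i : Fin n) :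
    occurrence (psi n α) i ≤ #{j | blockStart α (α i) ≤ α j ∧ α j < α i + 1} := by
  refine card_le_card fun j hj => ?_
  simp only [mem_filter, mem_univ, true_and] at hj ⊢
  obtain ⟨hji, hψ⟩ := hj
  refine ⟨not_lt.1 fun hlt => ((psi_lt_psi_iff_lt_blockStart α).2 hlt).ne hψ, ?_⟩
  rcases hji.lt_or_eq with hji | rfl
  · exact Nat.lt_succ_of_le (not_lt.1 fun hlt => ((h.psi_lt_psi_iff_of_lt hji).2 hlt).ne' hψ)
  · omega

lemma occurrence_psi_eq (i : Fin n) (hi : ¬IsBlockStart α (α i)) :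
    occurrence (psi n α) i = #{j | blockStart α (α i) ≤ α j ∧ α j < α i + 1} := by
  refine (h.occurrence_psi_le i).antisymm (card_le_card fun j hj => ?_)
  simp only [mem_filter, mem_univ, true_and] at hj ⊢
  have hψ : psi n α j = psi n α i := (psi_le_psi α (by omega)).antisymm
    (not_lt.1 fun hlt => ((psi_lt_psi_iff_lt_blockStart α).1 hlt).not_ge hj.1)
  refine ⟨not_lt.1 fun hij => ?_, hψ⟩
  rcases (Nat.le_of_lt_succ hj.2).lt_or_eq with hlt | heq
  · exact ((h.psi_lt_psi_iff_of_lt hij).2 hlt).ne hψ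
  · exact hij.ne (h.eq_of_apply_eq_of_not_isBlockStart hi heq).symm

lemma phi_psi : phi (psi n α) = α := by
  funext i
  have hS := h.one_le_blockStart i
  have hstart := h.isBlockStart_blockStart i
  have hSi : blockStart α (α i) ≤ α i := Nat.findGreatest_le _
  have hsplit := numBelow_add_card_filter (α := α) (show blockStart α (α i) ≤ α i + 1 by omega)
  have hup := h.numBelow_le_self (α i + 1)
  unfold IsBlockStart at hstart
  rw [phi, numBelow_psi_apply]
  by_cases hi : IsBlockStart α (α i)
  · have : blockStart α (α i) = α i := Nat.findGreatest_eq hi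
    have := h.occurrence_psi_le i
    omega
  · have hocc := h.occurrence_psi_eq i hi
    have hlow := numBelow_add_card_filter (α := α) (show α i ≤ α i + 1 by omega)
    have := h.numBelow_eq_self_of_not_isBlockStart (by have := (h.1 i).2; omega) hi
    have : 0 < #{j | α i ≤ α j ∧ α j < α i + 1} := card_pos.2 ⟨i, by simp⟩
    omega

end IsUnitIntervalPF

end

/-- The map `ψ`, sending a unit interval parking function with block structure
`π_1 | ⋯ | π_k` to the word whose `i`-th letter is the index of the block containing
`α_i`, is a bijection onto the set of Cayley permutations of length `n`, and it
preserves the inversion set. -/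
theorem psi_bijOn_cayley_and_preserves_inversions (n : ℕ) :
    Set.BijOn (psi n) {α | IsUnitIntervalPF n α} {w | IsCayley n w} ∧
      ∀ α : Fin n → ℕ, IsUnitIntervalPF n α →
        {p : Fin n × Fin n | p.1 < p.2 ∧ psi n α p.2 < psi n α p.1} =
          {p : Fin n × Fin n | p.1 < p.2 ∧ α p.2 < α p.1} := by
  refine ⟨Set.InvOn.bijOn (f' := phi) ⟨fun α hα => hα.phi_psi, fun w hw => psi_phi hw⟩
    (fun α hα => hα.isCayley_psi) (fun w _ => isUnitIntervalPF_phi w), fun α hα => ?_⟩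
  ext p
  exact and_congr_right hα.psi_lt_psi_iff_of_lt
end

section
/- Let W be a finite subset of positive-integer words of length n that is invariant under the S_n-action permuting positions. Then the total number of inversions over W equals (n/2) times the total number of descents over W, i.e., 2 * sum_{w in W} inv(w) = n * sum_{w in W} des(w). -/
/-!
Permuting positions is a bijection of `W`, and the permutations act transitively on ordered pairs
of distinct positions, so the number `c` of words of `W` with `w j < w i` is the same for every
such pair `(i, j)`. Summing over pairs, `∑ inv = C(n, 2) * c` and `∑ des = (n - 1) * c`.
-/

/-- The number of inversions of a word: pairs `(i,j)` with `i < j` and `w i > w j`. -/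
def invCount (n : ℕ) (w : Fin n → ℕ) : ℕ :=
  (Finset.univ.filter (fun p : Fin n × Fin n => p.1 < p.2 ∧ w p.2 < w p.1)).card

/-- The number of descents of a word: indices `i ∈ [n-1]` with `w i > w (i+1)`. -/
def desCount (n : ℕ) (w : Fin n → ℕ) : ℕ :=
  (Finset.univ.filter
    (fun p : Fin n × Fin n => (p.1 : ℕ) + 1 = (p.2 : ℕ) ∧ w p.2 < w p.1)).card

open Finset

lemma exists_perm_apply_eq_and_apply_eq {α : Type*} [DecidableEq α] {i j i' j' : α}
    (h : i ≠ j) (h' : i' ≠ j') : ∃ σ : Equiv.Perm α, σ i' = i ∧ σ j' = j := by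
  set τ := Equiv.swap i' i
  have hτ : τ j' ≠ i := fun hj =>
    h' (τ.injective (hj.trans (Equiv.swap_apply_left i' i).symm)).symm
  refine ⟨τ.trans (Equiv.swap (τ j') j), ?_, Equiv.swap_apply_left _ _⟩
  simp only [Equiv.trans_apply, τ, Equiv.swap_apply_left]
  exact Equiv.swap_apply_of_ne_of_ne (Ne.symm hτ) h

section PermInvariant

variable {α β : Type*} [DecidableEq α] {W : Finset (α → β)} (r : β → β → Prop) [DecidableRel r]

lemma card_filter_rel_apply_eq_of_perm_invariant
    (hW : ∀ w ∈ W, ∀ σ : Equiv.Perm α, w ∘ σ ∈ W) {i j i' j' : α} (h : i ≠ j) (h' : i' ≠ j') :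
    #{w ∈ W | r (w i) (w j)} = #{w ∈ W | r (w i') (w j')} := by
  obtain ⟨σ, hi, hj⟩ := exists_perm_apply_eq_and_apply_eq h h'
  refine card_nbij' (· ∘ σ) (· ∘ σ.symm) ?_ ?_ ?_ ?_
  · intro w hw
    simp only [coe_filter, Set.mem_ofPred_eq, Function.comp_apply, hi, hj] at hw ⊢
    exact ⟨hW w hw.1 σ, hw.2⟩
  · intro w hw
    simp only [coe_filter, Set.mem_ofPred_eq, Function.comp_apply, ← hi, ← hj,
      Equiv.symm_apply_apply] at hw ⊢
    exact ⟨hW w hw.1 σ.symm, hw.2⟩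
  · intro w _; ext; simp
  · intro w _; ext; simp

lemma exists_sum_card_filter_rel_eq_card_mul
    (hW : ∀ w ∈ W, ∀ σ : Equiv.Perm α, w ∘ σ ∈ W) :
    ∃ c, ∀ P : Finset (α × α), (∀ p ∈ P, p.1 ≠ p.2) →
      ∑ w ∈ W, #{p ∈ P | r (w p.1) (w p.2)} = #P * c := by
  have hconst : ∃ c, ∀ i j : α, i ≠ j → #{w ∈ W | r (w i) (w j)} = c := by
    by_cases hα : ∃ i₀ j₀ : α, i₀ ≠ j₀
    · obtain ⟨i₀, j₀, h₀⟩ := hα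
      exact ⟨_, fun i j h => card_filter_rel_apply_eq_of_perm_invariant r hW h h₀⟩
    · exact ⟨0, fun i j h => (hα ⟨i, j, h⟩).elim⟩
  obtain ⟨c, hc⟩ := hconst
  refine ⟨c, fun P hP => ?_⟩
  simp only [card_filter]
  rw [sum_comm, ← sum_const_nat fun p hp => (card_filter _ W).symm.trans (hc p.1 p.2 (hP p hp))]

end PermInvariant

lemma two_mul_card_filter_fst_lt_snd (n : ℕ) :
    2 * #{p : Fin n × Fin n | p.1 < p.2} = n * (n - 1) := by
  rw [Fintype.card_product_filter_lt, Fintype.card_fin, Nat.choose_two_right, mul_comm,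
    Nat.div_two_mul_two_of_even (Nat.even_mul_pred_self n)]

lemma card_filter_val_add_one_eq_val (n : ℕ) :
    #{p : Fin n × Fin n | (p.1 : ℕ) + 1 = p.2} = n - 1 := by
  rw [← card_range (n - 1)]
  refine card_bij (fun p _ => (p.1 : ℕ)) ?_ ?_ ?_
  · intro p hp
    simp only [mem_filter, mem_univ, true_and] at hp
    simp only [mem_range]
    omega
  · intro p hp q hq hpq
    simp only [mem_filter, mem_univ, true_and] at hp hq
    ext <;> simp only [Fin.val_inj] <;> omega
  · intro i hi
    simp only [mem_range] at hi
    exact ⟨(⟨i, by omega⟩, ⟨i + 1, by omega⟩), by simp, rfl⟩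

theorem two_mul_sum_inv_eq_n_mul_sum_des_general (n : ℕ) (W : Finset (Fin n → ℕ))
    (hinv : ∀ w ∈ W, ∀ σ : Equiv.Perm (Fin n), (w ∘ σ) ∈ W) :
    2 * ∑ w ∈ W, invCount n w = n * ∑ w ∈ W, desCount n w := by
  obtain ⟨c, hc⟩ := exists_sum_card_filter_rel_eq_card_mul (fun a b => b < a) hinv
  have hinvCount : ∑ w ∈ W, invCount n w = #{p : Fin n × Fin n | p.1 < p.2} * c := by
    simp only [invCount, ← filter_filter]
    exact hc _ fun p hp => (mem_filter.1 hp).2.ne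
  have hdesCount :
      ∑ w ∈ W, desCount n w = #{p : Fin n × Fin n | (p.1 : ℕ) + 1 = p.2} * c := by
    simp only [desCount, ← filter_filter]
    exact hc _ fun p hp h => by simp [h] at hp
  rw [hinvCount, hdesCount, card_filter_val_add_one_eq_val, ← mul_assoc,
    two_mul_card_filter_fst_lt_snd, mul_assoc]

/-- If `W` is a finite `S_n`-invariant set of words of positive integers, then
`2 * ∑_{w ∈ W} inv w = n * ∑_{w ∈ W} des w`. -/
theorem two_mul_sum_inv_eq_n_mul_sum_des (n : ℕ) (W : Finset (Fin n → ℕ))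
    (hpos : ∀ w ∈ W, ∀ i, 1 ≤ w i)
    (hinv : ∀ w ∈ W, ∀ σ : Equiv.Perm (Fin n), (w ∘ σ) ∈ W) :
    2 * ∑ w ∈ W, invCount n w = n * ∑ w ∈ W, desCount n w :=
  two_mul_sum_inv_eq_n_mul_sum_des_general n W hinv
end

section
/- For n >= 1, the total descent-top statistic over S_n satisfies sum_{w in S_n} dtop(w) = (n+1)!(n-1)/3, where dtop(w) = sum over descent positions i of w(i). -/
/-- The descent-top statistic of a permutation of `[n]` (values 1-indexed):
`dtop w = ∑_{i ∈ Des(w)} w(i)`, where `Des(w)` is the set of indices `i ∈ [n-1]`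
with `w(i) > w(i+1)`. Here `σ : Fin n ≃ Fin n` is 0-indexed, so the value at
position `p.1` is `σ p.1 + 1`. -/
def dtop (n : ℕ) (σ : Equiv.Perm (Fin n)) : ℕ :=
  ∑ p ∈ Finset.univ.filter
      (fun p : Fin n × Fin n => (p.1 : ℕ) + 1 = (p.2 : ℕ) ∧ σ p.2 < σ p.1),
    ((σ p.1 : ℕ) + 1)

/-!
`dtop w` is a sum over the `n - 1` adjacent positions `(i, i + 1)` of `w(i)` if `w(i) > w(i + 1)`
and `0` otherwise. Since `Sₙ` acts 2-transitively on `[n]`, the sum over `Sₙ` of any function of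
`(w(i), w(j))`, `i ≠ j`, does not depend on `(i, j)`; averaging over all `n(n-1)` such pairs shows
that it is `(n-2)!` times the sum over all pairs of distinct values. Each adjacent position thus
contributes `(n-2)! ∑_{a > b} a = (n-2)! ∑_{k < n} k(k+1) = (n-2)! (n-1)n(n+1)/3`.
-/

open Finset
open scoped Nat

section PermSums

variable {α M : Type*} [Fintype α] [DecidableEq α] [AddCommMonoid M]

theorem sum_perm_apply_apply_eq_of_ne {i j i' j' : α} (hij : i ≠ j) (hij' : i' ≠ j')
    (f : α → α → M) :
    ∑ σ : Equiv.Perm α, f (σ i) (σ j) = ∑ σ : Equiv.Perm α, f (σ i') (σ j') := by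
  obtain ⟨ρ, hρi, hρj⟩ :=
    MulAction.is_two_pretransitive_iff.mp (Equiv.Perm.isMultiplyPretransitive α 2) hij' hij
  exact Fintype.sum_equiv (Equiv.mulRight ρ) _ _ fun σ => by
    simp [← hρi, ← hρj, Equiv.Perm.smul_def]

theorem sum_offDiag_sum_perm (f : α → α → M) :
    ∑ p ∈ (univ : Finset α).offDiag, ∑ σ : Equiv.Perm α, f (σ p.1) (σ p.2)
      = (Fintype.card α)! • ∑ p ∈ (univ : Finset α).offDiag, f p.1 p.2 := by
  have invariant (σ : Equiv.Perm α) : ∑ p ∈ (univ : Finset α).offDiag, f (σ p.1) (σ p.2)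
      = ∑ p ∈ (univ : Finset α).offDiag, f p.1 p.2 :=
    sum_equiv (σ.prodCongr σ) (by simp [σ.injective.ne_iff]) fun _ _ => rfl
  rw [sum_comm, Fintype.sum_congr _ _ invariant, sum_const, card_univ, Fintype.card_perm]

theorem sum_perm_apply_apply_eq_factorial_nsmul [IsAddTorsionFree M] {i j : α} (hij : i ≠ j)
    (f : α → α → M) :
    ∑ σ : Equiv.Perm α, f (σ i) (σ j)
      = (Fintype.card α - 2)! • ∑ p ∈ (univ : Finset α).offDiag, f p.1 p.2 := by
  set n := Fintype.card α
  have hn : 1 < n := Fintype.one_lt_card_iff.mpr ⟨i, j, hij⟩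
  have hcard : #(univ : Finset α).offDiag = n * (n - 1) := by
    rw [offDiag_card, card_univ, Nat.mul_sub_one]
  have hfac : n * (n - 1) * (n - 2)! = n ! := by
    rw [mul_assoc, show n - 2 = n - 1 - 1 by omega, Nat.mul_factorial_pred (by omega),
      Nat.mul_factorial_pred (by omega)]
  apply nsmul_right_injective (Nat.mul_ne_zero (by omega) (by omega) : n * (n - 1) ≠ 0)
  change (n * (n - 1)) • _ = (n * (n - 1)) • _
  rw [smul_smul, hfac, ← sum_offDiag_sum_perm, ← hcard, ← sum_const]
  exact sum_congr rfl fun p hp => sum_perm_apply_apply_eq_of_ne hij (mem_offDiag.mp hp).2.2 f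

end PermSums

def adjacentPositions (n : ℕ) : Finset (Fin n × Fin n) :=
  univ.filter fun p => (p.1 : ℕ) + 1 = p.2

theorem card_adjacentPositions (n : ℕ) : #(adjacentPositions n) = n - 1 := by
  cases n with
  | zero => rfl
  | succ m =>
    have : adjacentPositions (m + 1) = univ.image fun k : Fin m => (k.castSucc, k.succ) := by
      ext ⟨a, b⟩
      simp only [adjacentPositions, mem_filter, mem_univ, true_and, mem_image, Prod.mk.injEq]
      constructor
      · intro h
        exact ⟨⟨a, by omega⟩, Fin.ext rfl, Fin.ext (by simp [h])⟩
      · rintro ⟨k, rfl, rfl⟩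
        simp
    rw [this, card_image_of_injective _ fun k l h => Fin.castSucc_injective _ (Prod.ext_iff.mp h).1]
    simp

theorem dtop_eq_sum_adjacentPositions (n : ℕ) (σ : Equiv.Perm (Fin n)) :
    dtop n σ = ∑ p ∈ adjacentPositions n, if σ p.2 < σ p.1 then (σ p.1 : ℕ) + 1 else 0 := by
  rw [dtop, adjacentPositions, ← filter_filter, sum_filter]

theorem sum_offDiag_ite_lt (n : ℕ) :
    ∑ p ∈ (univ : Finset (Fin n)).offDiag, (if p.2 < p.1 then (p.1 : ℕ) + 1 else 0)
      = ∑ k ∈ range n, k * (k + 1) := by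
  have diagonal_vanishes : ∀ p ∈ (univ : Finset (Fin n)) ×ˢ univ, p ∉ univ.offDiag →
      (if p.2 < p.1 then (p.1 : ℕ) + 1 else 0) = 0 := by
    intro p _ hp
    simp_all
  rw [sum_subset (by simp [subset_iff]) diagonal_vanishes, sum_product,
    ← Fin.sum_univ_eq_sum_range (fun k => k * (k + 1))]
  refine sum_congr rfl fun a _ => ?_
  rw [← sum_filter]
  dsimp only
  rw [sum_const, filter_gt_eq_Iio, Fin.card_Iio, smul_eq_mul]

theorem three_mul_sum_range_mul_succ (n : ℕ) :
    3 * ∑ k ∈ range (n + 1), k * (k + 1) = n * (n + 1) * (n + 2) := by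
  induction n with
  | zero => rfl
  | succ n ih => rw [sum_range_succ, mul_add, ih]; ring

theorem total_dtop_over_Sn_general (n : ℕ) :
    3 * ∑ σ : Equiv.Perm (Fin n), dtop n σ = Nat.factorial (n + 1) * (n - 1) := by
  have sum_at_position : ∀ p ∈ adjacentPositions n,
      ∑ σ : Equiv.Perm (Fin n), (if σ p.2 < σ p.1 then (σ p.1 : ℕ) + 1 else 0)
        = (n - 2)! * ∑ k ∈ range n, k * (k + 1) := by
    intro p hp
    have hne : p.1 ≠ p.2 := fun h => by simp [adjacentPositions, h] at hp
    rw [sum_perm_apply_apply_eq_factorial_nsmul hne fun a b => if b < a then (a : ℕ) + 1 else 0,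
      Fintype.card_fin, sum_offDiag_ite_lt, smul_eq_mul]
  simp_rw [dtop_eq_sum_adjacentPositions]
  rw [sum_comm, sum_congr rfl sum_at_position, sum_const, card_adjacentPositions, smul_eq_mul]
  rcases n with _ | _ | m
  · rfl
  · rfl
  · change 3 * ((m + 1) * (m ! * ∑ k ∈ range (m + 1 + 1), k * (k + 1))) = (m + 2 + 1)! * (m + 1)
    calc 3 * ((m + 1) * (m ! * ∑ k ∈ range (m + 1 + 1), k * (k + 1)))
        = (m + 1) * m ! * (3 * ∑ k ∈ range (m + 1 + 1), k * (k + 1)) := by ring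
      _ = (m + 2 + 1)! * (m + 1) := by
        rw [three_mul_sum_range_mul_succ, Nat.factorial_succ, Nat.factorial_succ,
          Nat.factorial_succ]
        ring

/-- For `n ≥ 1`, `∑_{w ∈ S_n} dtop w = (n+1)!(n-1)/3`. -/
theorem total_dtop_over_Sn (n : ℕ) (hn : 1 ≤ n) :
    3 * ∑ σ : Equiv.Perm (Fin n), dtop n σ = Nat.factorial (n + 1) * (n - 1) :=
  total_dtop_over_Sn_general n
end
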